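/- Popa–Sinnamon inequality, first form: let n ≥ 2 and let q₁,…,qₙ be positive, possibly infinite, exponents with Σ_{j=1}^n 1/qⱼ ≤ 1. Define pⱼ by 1/pⱼ = 1/qⱼ + 1 − Σ_{k=1}^n 1/q_k. Then for any σ-finite measure spaces (M₁,μ₁),…,(Mₙ,μₙ) and any nonnegative measurable functions f₁,…,fₙ on the product Mⁿ = ∏_{k=1}^n M_k, ∫_{Mⁿ} f₁⋯fₙ dμⁿ ≤ ∏_{j=1}^n ( ∫_{M_j} ( ∫_{Mⁿⱼ} fⱼ^{qⱼ} dμⁿⱼ )^{pⱼ/qⱼ} dμⱼ )^{1/pⱼ}, where Mⁿⱼ = ∏_{k≠j} M_k with measure μⁿⱼ = ∏_{k≠j} μ_k. -/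

import Mathlib

/-!
Put `g_j t = ‖f_j(t, ·)‖_{q_j}` and `ρ = 1 - Σ 1/q_k`, so that `1/p_j = 1/q_j + ρ`. Wherever
`0 < g_j(x_j) < ∞` one has `f_j = H_j^{1/q_j} (g_j(x_j)^{p_j})^ρ` with
`H_j = (f_j g_j(x_j)^{p_j/q_j - 1})^{q_j}`. Hölder's inequality on `Mⁿ` with the weights
`1/q_1, …, 1/q_n, ρ` then bounds `∫ f_1 ⋯ f_n` by `∏_j (∫ H_j)^{1/q_j} (∫ ∏_j g_j(x_j)^{p_j})^ρ`.
Integrating first over `Mⁿⱼ` gives `∫ H_j ≤ ∫ g_j^{p_j}`, and Tonelli splits the last integral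
into `∏_j ∫ g_j^{p_j}`, so the bound is `∏_j (∫ g_j^{p_j})^{1/q_j + ρ}`. For `q_j = ∞` one uses
`f_j ≤ g_j(x_j)` a.e. instead, with the constant `‖g_j‖_∞` in place of `g_j(x_j)` if also
`p_j = ∞`. The factorisation needs `g_j < ∞` a.e., which holds when the right-hand factors are
finite; otherwise either some factor vanishes, forcing `f_j = 0` a.e., or the right-hand side
is `∞`.
-/

open MeasureTheory
open scoped ENNReal

/-- Combine a point `t` of `M j` and a point of `∏_{k ≠ j} M k` into a point of the
full product `∏ k, M k`. -/
def glueAt {n : ℕ} {M : Fin n → Type*} (j : Fin n) (t : M j)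
    (y : ∀ k : {k : Fin n // k ≠ j}, M k) : ∀ k, M k :=
  fun k => if h : k = j then cast (congrArg M h.symm) t else y ⟨k, h⟩

/-- The `L^p` "norm" (for `0 < p ≤ ∞`) of a nonnegative function, the exponent `∞`
being interpreted as the essential supremum. -/
noncomputable def eNorm {α : Type*} [MeasurableSpace α] (μ : Measure α) (p : ℝ≥0∞)
    (g : α → ℝ≥0∞) : ℝ≥0∞ :=
  if p = ∞ then essSup g μ else (∫⁻ a, g a ^ p.toReal ∂μ) ^ (1 / p.toReal)

open Filter

section EssSup

variable {α β : Type*} [MeasurableSpace α] [MeasurableSpace β]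

theorem essSup_le_iff_measure_lt_eq_zero {ν : Measure β} {g : β → ℝ≥0∞} {c : ℝ≥0∞} :
    essSup g ν ≤ c ↔ ν {y | c < g y} = 0 := by
  refine ⟨fun h => measure_mono_null (fun y hy => (h.trans_lt hy).not_ge)
    (ae_iff.1 (ENNReal.ae_le_essSup g)), fun h => essSup_le_of_ae_le c ?_⟩
  simpa only [EventuallyLE, ae_iff, not_le] using h

theorem Measurable.essSup_prod_right {ν : Measure β} [SFinite ν] {F : α × β → ℝ≥0∞}
    (hF : Measurable F) : Measurable fun t => essSup (fun y => F (t, y)) ν := by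
  refine measurable_of_Iic fun c => ?_
  have hs : MeasurableSet {z : α × β | c < F z} := measurableSet_lt measurable_const hF
  simp only [Set.preimage, Set.mem_Iic, essSup_le_iff_measure_lt_eq_zero]
  exact measurable_measure_prodMk_left hs (measurableSet_singleton 0)

end EssSup

section ENorm

variable {α : Type*} [MeasurableSpace α]

@[simp]
theorem eNorm_top (μ : Measure α) (g : α → ℝ≥0∞) : eNorm μ ∞ g = essSup g μ := if_pos rfl

theorem eNorm_of_ne_top (μ : Measure α) {p : ℝ≥0∞} (hp : p ≠ ∞) (g : α → ℝ≥0∞) :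
    eNorm μ p g = (∫⁻ a, g a ^ p.toReal ∂μ) ^ (1 / p.toReal) := if_neg hp

theorem eNorm_rpow_toReal (μ : Measure α) {p : ℝ≥0∞} (hp0 : p ≠ 0) (hp : p ≠ ∞)
    (g : α → ℝ≥0∞) : eNorm μ p g ^ p.toReal = ∫⁻ a, g a ^ p.toReal ∂μ := by
  rw [eNorm_of_ne_top μ hp, ← ENNReal.rpow_mul, one_div_mul_cancel
    (ENNReal.toReal_pos hp0 hp).ne', ENNReal.rpow_one]

theorem ae_eq_zero_of_eNorm_eq_zero {μ : Measure α} {p : ℝ≥0∞} {g : α → ℝ≥0∞}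
    (hp0 : p ≠ 0) (hg : AEMeasurable g μ) (h : eNorm μ p g = 0) : g =ᵐ[μ] 0 := by
  by_cases hp : p = ∞
  · rwa [hp, eNorm_top, ENNReal.essSup_eq_zero_iff] at h
  have hpR : 0 < p.toReal := ENNReal.toReal_pos hp0 hp
  have hint : ∫⁻ a, g a ^ p.toReal ∂μ = 0 := by
    rw [← eNorm_rpow_toReal μ hp0 hp, h, ENNReal.zero_rpow_of_pos hpR]
  filter_upwards [(lintegral_eq_zero_iff' (hg.pow_const _)).1 hint] with a ha
  exact (ENNReal.rpow_eq_zero_iff_of_pos hpR).1 ha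

theorem ae_ne_top_of_eNorm_ne_top {μ : Measure α} {p : ℝ≥0∞} {g : α → ℝ≥0∞}
    (hp0 : p ≠ 0) (hp : p ≠ ∞) (hg : AEMeasurable g μ) (h : eNorm μ p g ≠ ∞) :
    ∀ᵐ a ∂μ, g a ≠ ∞ := by
  have hpR : 0 < p.toReal := ENNReal.toReal_pos hp0 hp
  have hint : ∫⁻ a, g a ^ p.toReal ∂μ ≠ ∞ := by
    rw [← eNorm_rpow_toReal μ hp0 hp]
    exact ENNReal.rpow_ne_top_of_nonneg hpR.le h
  filter_upwards [ae_lt_top' (hg.pow_const _) hint] with a ha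
  exact ((ENNReal.rpow_lt_top_iff_of_pos hpR).1 ha).ne

end ENorm

theorem ENNReal.rpow_mul_rpow_le_rpow_add (z : ℝ≥0∞) {u v : ℝ} (hu : 0 < u) (hv : v ≤ 0) :
    z ^ u * z ^ v ≤ z ^ (u + v) := by
  rcases eq_or_ne z 0 with rfl | hz0
  · simp [ENNReal.zero_rpow_of_pos hu]
  rcases eq_or_ne z ∞ with rfl | hztop
  · rcases hv.eq_or_lt with rfl | hv
    · simp
    · simp [ENNReal.top_rpow_of_neg hv]
  · rw [ENNReal.rpow_add u v hz0 hztop]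

theorem lintegral_prod_le_of_ae_le_mul_rpow {X ι : Type*} [MeasurableSpace X] [Fintype ι]
    {m : Measure X} {f H G : ι → X → ℝ≥0∞} {c : ι → ℝ≥0∞} {a : ι → ℝ} {r : ℝ}
    (hH : ∀ i, AEMeasurable (H i) m) (hG : ∀ i, AEMeasurable (G i) m)
    (ha : ∀ i, 0 ≤ a i) (hr : 0 ≤ r) (hsum : ∑ i, a i + r = 1)
    (hf : ∀ i, ∀ᵐ x ∂m, f i x ≤ c i * H i x ^ a i * G i x ^ r) :
    ∫⁻ x, ∏ i, f i x ∂m ≤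
      (∏ i, c i) * ((∫⁻ x, ∏ i, G i x ∂m) ^ r * ∏ i, (∫⁻ x, H i x ∂m) ^ a i) := by
  have hprodG : AEMeasurable (fun x => ∏ i, G i x) m :=
    Finset.univ.aemeasurable_fun_prod fun i _ => hG i
  calc ∫⁻ x, ∏ i, f i x ∂m
      ≤ ∫⁻ x, (∏ i, c i) * ((∏ i, G i x) ^ r * ∏ i, H i x ^ a i) ∂m := by
        refine lintegral_mono_ae ?_
        filter_upwards [ae_all_iff.2 hf] with x hx
        calc ∏ i, f i x ≤ ∏ i, c i * H i x ^ a i * G i x ^ r :=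
              Finset.prod_le_prod' fun i _ => hx i
          _ = (∏ i, c i) * ((∏ i, G i x) ^ r * ∏ i, H i x ^ a i) := by
              rw [← ENNReal.prod_rpow_of_nonneg hr, Finset.prod_mul_distrib,
                Finset.prod_mul_distrib]
              ring
    _ = (∏ i, c i) * ∫⁻ x, (∏ i, G i x) ^ r * ∏ i, H i x ^ a i ∂m :=
        lintegral_const_mul'' _ ((hprodG.pow_const r).mul
          (Finset.univ.aemeasurable_fun_prod fun i _ => (hH i).pow_const _))
    _ ≤ _ := by
        gcongr
        exact ENNReal.lintegral_mul_prod_norm_pow_le _ hprodG (fun i _ => hH i) r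
          (by rw [add_comm]; exact hsum) hr fun i _ => ha i

section SectionNorm

noncomputable def sectionNorm {α β : Type*} [MeasurableSpace β] (ν : Measure β) (q : ℝ≥0∞)
    (F : α × β → ℝ≥0∞) (t : α) : ℝ≥0∞ :=
  eNorm ν q fun y => F (t, y)

variable {α β : Type*} [MeasurableSpace α] [MeasurableSpace β] {μ : Measure α} {ν : Measure β}
  [SFinite ν] {F : α × β → ℝ≥0∞}

omit [MeasurableSpace α] [SFinite ν] in
theorem sectionNorm_top :
    sectionNorm ν ∞ F = fun t => essSup (fun y => F (t, y)) ν := funext fun _ => eNorm_top _ _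

theorem Measurable.sectionNorm (hF : Measurable F) (q : ℝ≥0∞) :
    Measurable (sectionNorm ν q F) := by
  by_cases hq : q = ∞
  · rw [hq, sectionNorm_top]
    exact hF.essSup_prod_right
  · show Measurable fun t => eNorm ν q fun y => F (t, y)
    simp only [eNorm_of_ne_top ν hq]
    exact ((hF.pow_const _).lintegral_prod_right').pow_const _

theorem ae_le_sectionNorm_top (hF : Measurable F) :
    ∀ᵐ z ∂μ.prod ν, F z ≤ sectionNorm ν ∞ F z.1 := by
  refine (Measure.ae_prod_iff_ae_ae
    (measurableSet_le hF ((hF.sectionNorm ∞).comp measurable_fst))).2 (ae_of_all _ fun t => ?_)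
  rw [sectionNorm_top]
  exact ENNReal.ae_le_essSup fun y => F (t, y)

theorem ae_eq_zero_of_sectionNorm_eq_zero (hF : Measurable F) {q : ℝ≥0∞} (hq : q ≠ 0) :
    ∀ᵐ z ∂μ.prod ν, sectionNorm ν q F z.1 = 0 → F z = 0 := by
  refine (Measure.ae_prod_iff_ae_ae (MeasurableSet.imp
    ((hF.sectionNorm q).comp measurable_fst (measurableSet_singleton 0))
    (hF (measurableSet_singleton 0)))).2 (ae_of_all _ fun t => ?_)
  by_cases ht : sectionNorm ν q F t = 0
  · filter_upwards [ae_eq_zero_of_eNorm_eq_zero hq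
      (hF.comp measurable_prodMk_left).aemeasurable ht] with y hy
    exact fun _ => hy
  · exact ae_of_all _ fun y h => absurd h ht

theorem ae_eq_zero_of_eNorm_sectionNorm_eq_zero (hF : Measurable F) {p q : ℝ≥0∞} (hp : p ≠ 0)
    (hq : q ≠ 0) (h : eNorm μ p (sectionNorm ν q F) = 0) : F =ᵐ[μ.prod ν] 0 := by
  filter_upwards [Measure.quasiMeasurePreserving_fst.ae
      (ae_eq_zero_of_eNorm_eq_zero hp (hF.sectionNorm q).aemeasurable h),
    ae_eq_zero_of_sectionNorm_eq_zero hF hq] with z hz hzero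
  exact hzero hz

theorem lintegral_mul_rpow_sectionNorm_rpow_le (hF : Measurable F) {q : ℝ≥0∞} (hq0 : q ≠ 0)
    (hq : q ≠ ∞) {e : ℝ} (he : e ≤ 0) :
    ∫⁻ z, (F z * sectionNorm ν q F z.1 ^ e) ^ q.toReal ∂μ.prod ν ≤
      ∫⁻ t, sectionNorm ν q F t ^ (q.toReal * (1 + e)) ∂μ := by
  have hqR : 0 < q.toReal := ENNReal.toReal_pos hq0 hq
  have hg := hF.sectionNorm (ν := ν) q
  calc ∫⁻ z, (F z * sectionNorm ν q F z.1 ^ e) ^ q.toReal ∂μ.prod ν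
      = ∫⁻ t, ∫⁻ y, F (t, y) ^ q.toReal * sectionNorm ν q F t ^ (e * q.toReal) ∂ν ∂μ := by
        have hm : Measurable fun z => (F z * sectionNorm ν q F z.1 ^ e) ^ q.toReal :=
          (hF.mul ((hg.comp measurable_fst).pow_const e)).pow_const _
        rw [lintegral_prod _ hm.aemeasurable]
        simp only [ENNReal.mul_rpow_of_nonneg _ _ hqR.le, ← ENNReal.rpow_mul]
    _ = ∫⁻ t, sectionNorm ν q F t ^ q.toReal * sectionNorm ν q F t ^ (e * q.toReal) ∂μ := by
        refine lintegral_congr fun t => ?_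
        have hm : Measurable fun y => F (t, y) ^ q.toReal :=
          (hF.comp measurable_prodMk_left).pow_const _
        rw [lintegral_mul_const _ hm, sectionNorm, eNorm_rpow_toReal ν hq0 hq]
    _ ≤ ∫⁻ t, sectionNorm ν q F t ^ (q.toReal * (1 + e)) ∂μ := by
        refine lintegral_mono fun t => ?_
        convert ENNReal.rpow_mul_rpow_le_rpow_add _ hqR
          (mul_nonpos_of_nonpos_of_nonneg he hqR.le) using 2
        ring

end SectionNorm

section HolderFactor

variable {α β : Type*} [MeasurableSpace α] [MeasurableSpace β] {μ : Measure α} {ν : Measure β}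
  [SFinite ν] {F : α × β → ℝ≥0∞}

theorem ae_eq_mul_rpow_mul_rpow_sectionNorm (hF : Measurable F) {q : ℝ≥0∞} (hq : q ≠ 0)
    (hg : ∀ᵐ t ∂μ, sectionNorm ν q F t ≠ ∞) {e d : ℝ} (hed : e + d = 0) :
    ∀ᵐ z ∂μ.prod ν, F z = F z * sectionNorm ν q F z.1 ^ e * sectionNorm ν q F z.1 ^ d := by
  filter_upwards [Measure.quasiMeasurePreserving_fst.ae hg,
    ae_eq_zero_of_sectionNorm_eq_zero hF hq] with z hgz hzero
  rcases eq_or_ne (sectionNorm ν q F z.1) 0 with h0 | h0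
  · simp [hzero h0]
  · rw [mul_assoc, ← ENNReal.rpow_add _ _ h0 hgz, hed, ENNReal.rpow_zero, mul_one]

theorem exists_ae_le_mul_rpow_sectionNorm_of_eq_top (hF : Measurable F) {q ρ : ℝ≥0∞}
    (hq : q = ∞) (hρ : ρ ≠ ∞) :
    ∃ (c : ℝ≥0∞) (H : α × β → ℝ≥0∞), Measurable H ∧
      (∀ᵐ z ∂μ.prod ν, F z ≤
        c * H z ^ (q⁻¹).toReal * (sectionNorm ν q F z.1 ^ ((q⁻¹ + ρ)⁻¹).toReal) ^ ρ.toReal) ∧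
      c * (∫⁻ z, H z ∂μ.prod ν) ^ (q⁻¹).toReal *
          (∫⁻ t, sectionNorm ν q F t ^ ((q⁻¹ + ρ)⁻¹).toReal ∂μ) ^ ρ.toReal ≤
        eNorm μ (q⁻¹ + ρ)⁻¹ (sectionNorm ν q F) := by
  subst hq
  rcases eq_or_ne ρ 0 with rfl | hρ0
  · refine ⟨essSup (sectionNorm ν ∞ F) μ, 1, measurable_const, ?_, by simp⟩
    filter_upwards [ae_le_sectionNorm_top hF,
      Measure.quasiMeasurePreserving_fst.ae (ENNReal.ae_le_essSup _)] with z hz hgz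
    simpa using hz.trans hgz
  · have hr : ρ.toReal⁻¹ * ρ.toReal = 1 := inv_mul_cancel₀ (ENNReal.toReal_pos hρ0 hρ).ne'
    refine ⟨1, 1, measurable_const, ?_, ?_⟩
    · filter_upwards [ae_le_sectionNorm_top hF] with z hz
      simpa [← ENNReal.rpow_mul, hr] using hz
    · simp [eNorm_of_ne_top μ (ENNReal.inv_ne_top.2 hρ0)]

theorem exists_ae_le_mul_rpow_sectionNorm_of_ne_top (hF : Measurable F) {q ρ : ℝ≥0∞}
    (hq : 0 < q) (hqt : q ≠ ∞) (hρ : ρ ≠ ∞)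
    (hfin : eNorm μ (q⁻¹ + ρ)⁻¹ (sectionNorm ν q F) ≠ ∞) :
    ∃ (c : ℝ≥0∞) (H : α × β → ℝ≥0∞), Measurable H ∧
      (∀ᵐ z ∂μ.prod ν, F z ≤
        c * H z ^ (q⁻¹).toReal * (sectionNorm ν q F z.1 ^ ((q⁻¹ + ρ)⁻¹).toReal) ^ ρ.toReal) ∧
      c * (∫⁻ z, H z ∂μ.prod ν) ^ (q⁻¹).toReal *
          (∫⁻ t, sectionNorm ν q F t ^ ((q⁻¹ + ρ)⁻¹).toReal ∂μ) ^ ρ.toReal ≤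
        eNorm μ (q⁻¹ + ρ)⁻¹ (sectionNorm ν q F) := by
  have hqR : 0 < q.toReal := ENNReal.toReal_pos hq.ne' hqt
  have hpR : ((q⁻¹ + ρ)⁻¹).toReal = ((q⁻¹).toReal + ρ.toReal)⁻¹ := by
    rw [ENNReal.toReal_inv, ENNReal.toReal_add (ENNReal.inv_ne_top.2 hq.ne') hρ]
  have haq : (q⁻¹).toReal * q.toReal = 1 := by
    rw [ENNReal.toReal_inv]; exact inv_mul_cancel₀ hqR.ne'
  have ha : 0 < (q⁻¹).toReal := by rw [ENNReal.toReal_inv]; exact inv_pos.2 hqR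
  set g := sectionNorm ν q F
  set a := (q⁻¹).toReal
  set r := ρ.toReal
  set pR := ((q⁻¹ + ρ)⁻¹).toReal
  have hr : 0 ≤ r := ENNReal.toReal_nonneg
  have hpar : pR * (a + r) = 1 := by rw [hpR]; exact inv_mul_cancel₀ (by positivity)
  have hp0 : (q⁻¹ + ρ)⁻¹ ≠ 0 :=
    ENNReal.inv_ne_zero.2 (ENNReal.add_ne_top.2 ⟨ENNReal.inv_ne_top.2 hq.ne', hρ⟩)
  have hp : (q⁻¹ + ρ)⁻¹ ≠ ∞ := by simp [hqt]
  -- `H ^ a = F g^{pR a - 1}`, and `g^{pR a - 1} (g^{pR})^r = 1` wherever `0 < g < ∞`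
  refine ⟨1, fun z => (F z * g z.1 ^ (pR * a - 1)) ^ q.toReal,
    (hF.mul (((hF.sectionNorm q).comp measurable_fst).pow_const _)).pow_const _, ?_, ?_⟩
  · filter_upwards [ae_eq_mul_rpow_mul_rpow_sectionNorm hF hq.ne'
      (ae_ne_top_of_eNorm_ne_top hp0 hp (hF.sectionNorm q).aemeasurable hfin)
      (by linear_combination hpar : pR * a - 1 + pR * r = 0)] with z hz
    rw [one_mul, ← ENNReal.rpow_mul _ q.toReal, mul_comm q.toReal, haq, ENNReal.rpow_one,
      ← ENNReal.rpow_mul]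
    exact hz.le
  · have hH : ∫⁻ z, (F z * g z.1 ^ (pR * a - 1)) ^ q.toReal ∂μ.prod ν ≤ ∫⁻ t, g t ^ pR ∂μ := by
      refine (lintegral_mul_rpow_sectionNorm_rpow_le hF hq.ne' hqt (by nlinarith)).trans_eq
        (lintegral_congr fun t => ?_)
      congr 1
      linear_combination pR * haq
    calc 1 * (∫⁻ z, (F z * g z.1 ^ (pR * a - 1)) ^ q.toReal ∂μ.prod ν) ^ a *
          (∫⁻ t, g t ^ pR ∂μ) ^ r
        ≤ (∫⁻ t, g t ^ pR ∂μ) ^ a * (∫⁻ t, g t ^ pR ∂μ) ^ r := by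
          rw [one_mul]; gcongr
      _ = eNorm μ (q⁻¹ + ρ)⁻¹ g := by
          rw [← ENNReal.rpow_add_of_nonneg _ _ ha.le hr, eNorm_of_ne_top μ hp, one_div]
          congr 1
          rw [← inv_inv (a + r), ← hpR]

end HolderFactor

section Split

variable {n : ℕ} {M : Fin n → Type*} [∀ k, MeasurableSpace (M k)]

def splitAt (j : Fin n) (x : ∀ k, M k) : M j × ∀ k : {k : Fin n // k ≠ j}, M k :=
  (x j, fun k => x k)

omit [∀ k, MeasurableSpace (M k)] in
@[simp]
theorem glueAt_splitAt (j : Fin n) (x : ∀ k, M k) : glueAt j (x j) (fun k => x k) = x := by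
  funext k
  by_cases h : k = j
  · subst h
    simp [glueAt]
  · simp [glueAt, h]

theorem measurable_splitAt (j : Fin n) : Measurable (splitAt (M := M) j) :=
  (measurable_pi_apply j).prodMk (measurable_pi_lambda _ fun _ => measurable_pi_apply _)

theorem measurable_glueAt (j : Fin n) :
    Measurable fun z : M j × ∀ k : {k : Fin n // k ≠ j}, M k => glueAt j z.1 z.2 := by
  refine measurable_pi_lambda _ fun k => ?_
  by_cases h : k = j
  · subst h
    simpa [glueAt] using measurable_fst
  · simp only [glueAt, dif_neg h]
    exact (measurable_pi_apply _).comp measurable_snd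

theorem measurePreserving_splitAt (μ : ∀ k, Measure (M k)) [∀ k, SigmaFinite (μ k)]
    (j : Fin n) :
    MeasurePreserving (splitAt j) (Measure.pi μ)
      ((μ j).prod (Measure.pi fun k : {k : Fin n // k ≠ j} => μ k)) := by
  classical
  have hunique : MeasurePreserving
      (Prod.map (MeasurableEquiv.piUnique fun k : {k : Fin n // k = j} => M k) id)
      ((Measure.pi fun k : {k : Fin n // k = j} => μ k).prod
        (Measure.pi fun k : {k : Fin n // ¬ k = j} => μ k))
      ((μ j).prod (Measure.pi fun k : {k : Fin n // k ≠ j} => μ k)) :=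
    (measurePreserving_piUnique fun k : {k : Fin n // k = j} => μ k).prod
      (MeasurePreserving.id _)
  rw [Subsingleton.elim (Fintype.subtypeEq j) (Subtype.fintype fun k => k = j)] at hunique
  exact hunique.comp (measurePreserving_piEquivPiSubtypeProd μ fun k => k = j)

end Split

theorem lintegral_pi_prod_eq_prod {n : ℕ} {M : Fin n → Type*} [∀ k, MeasurableSpace (M k)]
    (μ : ∀ k, Measure (M k)) [∀ k, SigmaFinite (μ k)] {h : ∀ k, M k → ℝ≥0∞}
    (hh : ∀ k, Measurable (h k)) :
    ∫⁻ x, ∏ k, h k (x k) ∂Measure.pi μ = ∏ k, ∫⁻ t, h k t ∂μ k := by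
  induction n with
  | zero => simp
  | succ m ih =>
    have hrest : Measurable fun y : ∀ k : Fin m, M (Fin.succAbove 0 k) => ∏ k, h _ (y k) :=
      Finset.measurable_prod _ fun k _ => (hh _).comp (measurable_pi_apply k)
    have hsplit : Measurable fun z : M 0 × ∀ k : Fin m, M (Fin.succAbove 0 k) =>
        h 0 z.1 * ∏ k, h _ (z.2 k) :=
      ((hh 0).comp measurable_fst).mul (hrest.comp measurable_snd)
    calc ∫⁻ x, ∏ k, h k (x k) ∂Measure.pi μ
        = ∫⁻ x, h 0 (x 0) * ∏ k : Fin m, h _ (x (Fin.succAbove 0 k)) ∂Measure.pi μ := by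
          simp only [Fin.prod_univ_succAbove _ 0]
      _ = ∫⁻ z, h 0 z.1 * ∏ k, h _ (z.2 k)
            ∂((μ 0).prod (Measure.pi fun k => μ (Fin.succAbove 0 k))) :=
          (measurePreserving_piFinSuccAbove μ 0).lintegral_comp hsplit
      _ = ∏ k, ∫⁻ t, h k t ∂μ k := by
          rw [lintegral_prod_mul (hh 0).aemeasurable hrest.aemeasurable,
            ih _ fun k => hh _, Fin.prod_univ_succAbove _ 0]

section MixedNorm

variable {n : ℕ} {M : Fin n → Type*} [∀ k, MeasurableSpace (M k)]

noncomputable def mixedNorm (μ : ∀ k, Measure (M k)) (j : Fin n) (p q : ℝ≥0∞)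
    (f : (∀ k, M k) → ℝ≥0∞) : ℝ≥0∞ :=
  eNorm (μ j) p (sectionNorm (Measure.pi fun k : {k : Fin n // k ≠ j} => μ k) q
    fun z => f (glueAt j z.1 z.2))

variable (μ : ∀ k, Measure (M k)) [∀ k, SigmaFinite (μ k)]

theorem ae_eq_zero_of_mixedNorm_eq_zero {f : (∀ k, M k) → ℝ≥0∞} (hf : Measurable f)
    {j : Fin n} {p q : ℝ≥0∞} (hp : p ≠ 0) (hq : q ≠ 0) (h : mixedNorm μ j p q f = 0) :
    f =ᵐ[Measure.pi μ] 0 := by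
  filter_upwards [(measurePreserving_splitAt μ j).quasiMeasurePreserving.ae
    (ae_eq_zero_of_eNorm_sectionNorm_eq_zero (hf.comp (measurable_glueAt j)) hp hq h)]
    with x hx
  simpa only [splitAt, Function.comp_apply, Pi.zero_apply, glueAt_splitAt] using hx

theorem lintegral_prod_le_prod_mixedNorm {f : Fin n → (∀ k, M k) → ℝ≥0∞}
    (hf : ∀ j, Measurable (f j)) {q : Fin n → ℝ≥0∞} {ρ : ℝ≥0∞} (hq : ∀ j, 0 < q j)
    (hρ : ρ ≠ ∞) (hsum : ∑ j, ((q j)⁻¹).toReal + ρ.toReal = 1)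
    (hfin : ∀ j, mixedNorm μ j ((q j)⁻¹ + ρ)⁻¹ (q j) (f j) ≠ ∞) :
    ∫⁻ x, ∏ j, f j x ∂Measure.pi μ ≤ ∏ j, mixedNorm μ j ((q j)⁻¹ + ρ)⁻¹ (q j) (f j) := by
  set ν : ∀ j, Measure (∀ k : {k : Fin n // k ≠ j}, M k) := fun j => Measure.pi fun k => μ k
  set g : ∀ j, M j → ℝ≥0∞ := fun j => sectionNorm (ν j) (q j) fun z => f j (glueAt j z.1 z.2)
  set pR : Fin n → ℝ := fun j => (((q j)⁻¹ + ρ)⁻¹).toReal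
  have hF : ∀ j, Measurable fun z : M j × _ => f j (glueAt j z.1 z.2) :=
    fun j => (hf j).comp (measurable_glueAt j)
  choose c H hH hle hint using fun j => (eq_or_ne (q j) ∞).elim
    (fun hqt => exists_ae_le_mul_rpow_sectionNorm_of_eq_top (μ := μ j) (hF j) hqt hρ)
    (fun hqt => exists_ae_le_mul_rpow_sectionNorm_of_ne_top (hF j) (hq j) hqt hρ (hfin j))
  have hHsplit : ∀ j, ∫⁻ x, H j (splitAt j x) ∂Measure.pi μ = ∫⁻ z, H j z ∂(μ j).prod (ν j) :=
    fun j => (measurePreserving_splitAt μ j).lintegral_comp (hH j)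
  calc ∫⁻ x, ∏ j, f j x ∂Measure.pi μ
      ≤ (∏ j, c j) * ((∫⁻ x, ∏ j, g j (x j) ^ pR j ∂Measure.pi μ) ^ ρ.toReal *
          ∏ j, (∫⁻ x, H j (splitAt j x) ∂Measure.pi μ) ^ ((q j)⁻¹).toReal) := by
        refine lintegral_prod_le_of_ae_le_mul_rpow
          (fun j => ((hH j).comp (measurable_splitAt j)).aemeasurable)
          (fun j => ((((hF j).sectionNorm _).comp (measurable_pi_apply j)).pow_const
            _).aemeasurable)
          (fun j => ENNReal.toReal_nonneg) ENNReal.toReal_nonneg hsum fun j => ?_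
        filter_upwards [(measurePreserving_splitAt μ j).quasiMeasurePreserving.ae (hle j)]
          with x hx
        simpa only [splitAt, glueAt_splitAt] using hx
    _ = ∏ j, c j * (∫⁻ z, H j z ∂(μ j).prod (ν j)) ^ ((q j)⁻¹).toReal *
          (∫⁻ t, g j t ^ pR j ∂μ j) ^ ρ.toReal := by
        rw [lintegral_pi_prod_eq_prod μ fun j => ((hF j).sectionNorm _).pow_const _,
          ← ENNReal.prod_rpow_of_nonneg ENNReal.toReal_nonneg]
        simp only [hHsplit, Finset.prod_mul_distrib]
        ring
    _ ≤ ∏ j, mixedNorm μ j ((q j)⁻¹ + ρ)⁻¹ (q j) (f j) := Finset.prod_le_prod' fun j _ => hint j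

end MixedNorm

theorem popa_sinnamon_first_general {n : ℕ} {M : Fin n → Type*}
    [∀ k, MeasurableSpace (M k)] (μ : ∀ k, Measure (M k)) [∀ k, SigmaFinite (μ k)]
    (q : Fin n → ℝ≥0∞) (hq : ∀ j, 0 < q j) (hq1 : ∑ k : Fin n, (q k)⁻¹ ≤ 1)
    (f : Fin n → (∀ k, M k) → ℝ≥0∞) (hf : ∀ j, Measurable (f j)) :
    ∫⁻ x, ∏ j : Fin n, f j x ∂(Measure.pi μ) ≤
      ∏ j : Fin n,
        eNorm (μ j) ((q j)⁻¹ + (1 - ∑ k : Fin n, (q k)⁻¹))⁻¹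
          (fun t => eNorm (Measure.pi fun k : {k : Fin n // k ≠ j} => μ k) (q j)
            (fun y => f j (glueAt j t y))) := by
  set ρ := 1 - ∑ k, (q k)⁻¹
  change _ ≤ ∏ j, mixedNorm μ j ((q j)⁻¹ + ρ)⁻¹ (q j) (f j)
  have hqinv : ∀ j, (q j)⁻¹ ≠ ∞ := fun j => ENNReal.inv_ne_top.2 (hq j).ne'
  have hρ : ρ ≠ ∞ := ENNReal.sub_ne_top ENNReal.one_ne_top
  have hsum : ∑ j, ((q j)⁻¹).toReal + ρ.toReal = 1 := by
    rw [← ENNReal.toReal_sum fun j _ => hqinv j, ← ENNReal.toReal_add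
      (ENNReal.sum_ne_top.2 fun j _ => hqinv j) hρ, add_tsub_cancel_of_le hq1, ENNReal.toReal_one]
  by_cases hfin : ∀ j, mixedNorm μ j ((q j)⁻¹ + ρ)⁻¹ (q j) (f j) ≠ ∞
  · exact lintegral_prod_le_prod_mixedNorm μ hf hq hρ hsum hfin
  obtain ⟨j₀, hj₀⟩ := not_forall_not.1 hfin
  by_cases hzero : ∃ j, mixedNorm μ j ((q j)⁻¹ + ρ)⁻¹ (q j) (f j) = 0
  · obtain ⟨j, hj⟩ := hzero
    have hfj := ae_eq_zero_of_mixedNorm_eq_zero μ (hf j)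
      (ENNReal.inv_ne_zero.2 (ENNReal.add_ne_top.2 ⟨hqinv j, hρ⟩)) (hq j).ne' hj
    refine le_of_eq_of_le (lintegral_eq_zero_iff' ?_ |>.2 ?_) zero_le
    · exact Finset.aemeasurable_fun_prod _ fun j _ => (hf j).aemeasurable
    · filter_upwards [hfj] with x hx
      exact Finset.prod_eq_zero (Finset.mem_univ j) hx
  · rw [← Finset.mul_prod_erase _ _ (Finset.mem_univ j₀), hj₀,
      ENNReal.top_mul (Finset.prod_ne_zero_iff.2 fun j _ => not_exists.1 hzero j)]
    exact le_top

/-- Popa–Sinnamon inequality, first form: for `n ≥ 2` and exponents `q₁, …, qₙ ∈ (0,∞]`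
with `Σ 1/qⱼ ≤ 1`, setting `1/pⱼ = 1/qⱼ + 1 − Σ 1/q_k`, one has
`∫ f₁ ⋯ fₙ ≤ ∏ⱼ (∫_{M_j} (∫_{Mⁿⱼ} fⱼ^{qⱼ})^{pⱼ/qⱼ} dμⱼ)^{1/pⱼ}`, where the inner norm
is over all the variables except the `j`ᵗʰ and the outer norm over the `j`ᵗʰ, with `∞`
exponents interpreted as essential suprema. -/
theorem popa_sinnamon_first {n : ℕ} (hn : 2 ≤ n) {M : Fin n → Type*}
    [∀ k, MeasurableSpace (M k)] (μ : ∀ k, Measure (M k)) [∀ k, SigmaFinite (μ k)]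
    (q : Fin n → ℝ≥0∞) (hq : ∀ j, 0 < q j) (hq1 : ∑ k : Fin n, (q k)⁻¹ ≤ 1)
    (f : Fin n → (∀ k, M k) → ℝ≥0∞) (hf : ∀ j, Measurable (f j)) :
    ∫⁻ x, ∏ j : Fin n, f j x ∂(Measure.pi μ) ≤
      ∏ j : Fin n,
        eNorm (μ j) ((q j)⁻¹ + (1 - ∑ k : Fin n, (q k)⁻¹))⁻¹
          (fun t => eNorm (Measure.pi fun k : {k : Fin n // k ≠ j} => μ k) (q j)
            (fun y => f j (glueAt j t y))) :=
  popa_sinnamon_first_general μ q hq hq1 f hf
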